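/- arXiv:2510.07086 — 6 statements merged into one kernel-verified Lean document; each statement's English description precedes it below -/
import Mathlib

section
/- Let W be a closed convex subset of the space of d×n real matrices with Frobenius-norm diameter at most D. Run online gradient descent with a non-increasing sequence of positive learning rates η_t: W_{t+1} = proj_W(W_t − η_t G_t) where G_t is a subgradient of the convex loss L_t at W_t. Then for any comparator sequence U_1,…,U_T in W, letting P_T = Σ_{t=2}^T ‖U_t − U_{t−1}‖_F, we have Σ_{t=1}^T (L_t(W_t) − L_t(U_t)) ≤ (D/η_T)(D/2 + P_T) + Σ_{t=1}^T (η_t/2)‖G_t‖_F². -/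
/-!
Projection onto a convex set does not increase the distance to its points, so each step gives
`⟪G t, W t - U t⟫ ≤ (‖W t - U t‖² - ‖W (t+1) - U t‖²) / (2 η t) + η t ‖G t‖² / 2`, and by the
subgradient inequality the left side bounds `L t (W t) - L t (U t)`. The first terms almost
telescope: moving the comparator from `U t` to `U (t+1)` changes a squared distance by at most
`2 D ‖U (t+1) - U t‖`, and since `1 / η t` is non-decreasing and all squared distances are at
most `D²`, the mismatched weights add up to at most `D² / (2 η (T-1))`.
-/

open Finset
open scoped InnerProductSpace

section ProjectionStep

variable {E : Type*} [NormedAddCommGroup E] [InnerProductSpace ℝ E] {K : Set E} {y p u : E}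

theorem real_inner_sub_sub_nonpos_of_isMinOn (hK : Convex ℝ K) (hp : p ∈ K)
    (hmin : IsMinOn (fun v => ‖v - y‖) K p) (hu : u ∈ K) : ⟪y - p, u - p⟫_ℝ ≤ 0 := by
  have hmin' : IsMinOn (fun v => ‖y - v‖) K p := by simpa only [norm_sub_rev y] using hmin
  exact (norm_eq_iInf_iff_real_inner_le_zero hK hp).1 (hmin'.iInf_eq hp).symm u hu

theorem norm_sub_sq_le_of_isMinOn (hK : Convex ℝ K) (hp : p ∈ K)
    (hmin : IsMinOn (fun v => ‖v - y‖) K p) (hu : u ∈ K) : ‖p - u‖ ^ 2 ≤ ‖y - u‖ ^ 2 := by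
  have hobtuse := real_inner_sub_sub_nonpos_of_isMinOn hK hp hmin hu
  have hexpand : ‖y - u‖ ^ 2 = ‖y - p‖ ^ 2 - 2 * ⟪y - p, u - p⟫_ℝ + ‖p - u‖ ^ 2 := by
    rw [← sub_add_sub_cancel y p u, norm_add_sq_real, ← neg_sub u p, inner_neg_right]
    ring
  nlinarith [sq_nonneg ‖y - p‖]

theorem real_inner_le_of_isMinOn_norm_sub_smul {w g : E} {η : ℝ} (hK : Convex ℝ K) (hη : 0 < η)
    (hp : p ∈ K) (hmin : IsMinOn (fun v => ‖v - (w - η • g)‖) K p) (hu : u ∈ K) :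
    ⟪g, w - u⟫_ℝ ≤ (‖w - u‖ ^ 2 - ‖p - u‖ ^ 2) / (2 * η) + η / 2 * ‖g‖ ^ 2 := by
  have hcontract := norm_sub_sq_le_of_isMinOn hK hp hmin hu
  have hexpand : ‖w - η • g - u‖ ^ 2 = ‖w - u‖ ^ 2 - 2 * η * ⟪g, w - u⟫_ℝ + η ^ 2 * ‖g‖ ^ 2 := by
    rw [sub_right_comm, norm_sub_sq_real, real_inner_smul_right, real_inner_comm, norm_smul,
      Real.norm_eq_abs, mul_pow, sq_abs]
    ring
  rw [div_add' _ _ _ (by positivity), le_div_iff₀ (by positivity)]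
  nlinarith

end ProjectionStep

theorem norm_sub_sq_le_norm_sub_sq_add {E : Type*} [SeminormedAddCommGroup E] {w u u' : E} {D : ℝ}
    (hu : ‖w - u‖ ≤ D) (hu' : ‖w - u'‖ ≤ D) :
    ‖w - u'‖ ^ 2 ≤ ‖w - u‖ ^ 2 + 2 * D * ‖u' - u‖ := by
  have hdiff : ‖w - u'‖ - ‖w - u‖ ≤ ‖u' - u‖ := by
    simpa only [sub_sub_sub_cancel_left, norm_sub_rev u] using norm_sub_norm_le (w - u') (w - u)
  nlinarith [norm_nonneg (w - u), norm_nonneg (w - u'), norm_nonneg (u' - u)]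

theorem sum_mul_sub_le_of_monotone {a b c p : ℕ → ℝ} {D : ℝ} (hD : 0 ≤ D) (hc : Monotone c)
    (hc0 : ∀ t, 0 ≤ c t) (ha : a 0 ≤ D ^ 2) (hb : ∀ t, b t ≤ D ^ 2) (hb0 : ∀ t, 0 ≤ b t)
    (hp : ∀ t, 0 ≤ p t) (hab : ∀ t, a (t + 1) ≤ b t + 2 * D * p t) (S : ℕ) :
    ∑ t ∈ range (S + 1), c t * (a t - b t) ≤ c S * (D ^ 2 + 2 * D * ∑ t ∈ range S, p t) := by
  -- keeping `- c S * b S` lets the next step's `a (S + 1)` be absorbed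
  have hstrong : ∀ S, ∑ t ∈ range (S + 1), c t * (a t - b t) ≤
      c S * (D ^ 2 + 2 * D * ∑ t ∈ range S, p t - b S) := by
    intro S
    induction S with
    | zero => simpa using mul_le_mul_of_nonneg_left (sub_le_sub_right ha (b 0)) (hc0 0)
    | succ S ih =>
      have hP : 0 ≤ ∑ t ∈ range S, p t := sum_nonneg fun t _ => hp t
      have hgap : 0 ≤ D ^ 2 + 2 * D * ∑ t ∈ range S, p t - b S := by
        nlinarith [hb S, mul_nonneg hD hP]
      rw [sum_range_succ _ (S + 1), sum_range_succ p S]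
      nlinarith [mul_nonneg (sub_nonneg.2 (hc (Nat.le_succ S))) hgap,
        mul_le_mul_of_nonneg_left (hab S) (hc0 (S + 1))]
  linarith [hstrong S, mul_nonneg (hc0 S) (hb0 S)]

theorem sum_mul_norm_sub_sq_sub_le {E : Type*} [SeminormedAddCommGroup E] {K : Set E} {D : ℝ}
    (hdiam : ∀ w ∈ K, ∀ w' ∈ K, ‖w - w'‖ ≤ D) {W U : ℕ → E} (hW : ∀ t, W t ∈ K)
    (hU : ∀ t, U t ∈ K) {c : ℕ → ℝ} (hc : Monotone c) (hc0 : ∀ t, 0 ≤ c t) (S : ℕ) :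
    ∑ t ∈ range (S + 1), c t * (‖W t - U t‖ ^ 2 - ‖W (t + 1) - U t‖ ^ 2) ≤
      c S * (D ^ 2 + 2 * D * ∑ t ∈ range S, ‖U (t + 1) - U t‖) := by
  have hsq_le {w u : E} (hw : w ∈ K) (hu : u ∈ K) : ‖w - u‖ ^ 2 ≤ D ^ 2 :=
    pow_le_pow_left₀ (norm_nonneg _) (hdiam w hw u hu) 2
  exact sum_mul_sub_le_of_monotone ((norm_nonneg _).trans (hdiam _ (hW 0) _ (hW 0))) hc hc0
    (hsq_le (hW 0) (hU 0)) (fun t => hsq_le (hW (t + 1)) (hU t)) (fun t => sq_nonneg _)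
    (fun t => norm_nonneg _)
    (fun t => norm_sub_sq_le_norm_sub_sq_add (hdiam _ (hW _) _ (hU t)) (hdiam _ (hW _) _ (hU _))) S

/-- The space of `d × n` real matrices with the Frobenius norm is modelled as
`EuclideanSpace ℝ (Fin d × Fin n)`. -/
theorem ogd_dynamic_regret_general {d n T : ℕ}
    (Wset : Set (EuclideanSpace ℝ (Fin d × Fin n))) (D : ℝ)
    (hconv : Convex ℝ Wset)
    (hdiam : ∀ w ∈ Wset, ∀ w' ∈ Wset, ‖w - w'‖ ≤ D)
    (L : ℕ → EuclideanSpace ℝ (Fin d × Fin n) → ℝ)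
    (η : ℕ → ℝ) (hηpos : ∀ t, 0 < η t)
    (hηmono : ∀ s t, s ≤ t → η t ≤ η s)
    (W G : ℕ → EuclideanSpace ℝ (Fin d × Fin n))
    (hWmem : ∀ t, W t ∈ Wset)
    -- G t is a subgradient of L t at W t
    (hsub : ∀ t, ∀ u ∈ Wset, L t (W t) + (inner ℝ (G t) (u - W t) : ℝ) ≤ L t u)
    -- W (t+1) is the nearest-point projection of W t - η t • G t onto Wset
    (hproj : ∀ t, ∀ u ∈ Wset,
      ‖W (t + 1) - (W t - η t • G t)‖ ≤ ‖u - (W t - η t • G t)‖)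
    (U : ℕ → EuclideanSpace ℝ (Fin d × Fin n)) (hU : ∀ t, U t ∈ Wset) :
    ∑ t ∈ Finset.range T, (L t (W t) - L t (U t)) ≤
      (D / η (T - 1)) * (D / 2 + ∑ t ∈ Finset.range (T - 1), ‖U (t + 1) - U t‖)
        + ∑ t ∈ Finset.range T, (η t / 2) * ‖G t‖ ^ 2 := by
  have hD : 0 ≤ D := (norm_nonneg _).trans (hdiam (W 0) (hWmem 0) (W 0) (hWmem 0))
  have hstep (t : ℕ) : L t (W t) - L t (U t) ≤
      (2 * η t)⁻¹ * (‖W t - U t‖ ^ 2 - ‖W (t + 1) - U t‖ ^ 2) + η t / 2 * ‖G t‖ ^ 2 := by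
    have hlin := hsub t (U t) (hU t)
    rw [← neg_sub (W t) (U t), inner_neg_right] at hlin
    rw [← div_eq_inv_mul]
    linarith [real_inner_le_of_isMinOn_norm_sub_smul hconv (hηpos t) (hWmem (t + 1)) (hproj t)
      (hU t)]
  rcases T with _ | S
  · simpa using mul_nonneg (div_nonneg hD (hηpos 0).le) (div_nonneg hD zero_le_two)
  have hc : Monotone fun t => (2 * η t)⁻¹ := fun s t hst =>
    inv_anti₀ (by linarith [hηpos t]) (by linarith [hηmono s t hst])
  have hpath := sum_mul_norm_sub_sq_sub_le hdiam hWmem hU hc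
    (fun t => (inv_pos.2 (by linarith [hηpos t])).le) S
  have hη := hηpos S
  rw [Nat.add_sub_cancel]
  calc ∑ t ∈ range (S + 1), (L t (W t) - L t (U t))
      ≤ ∑ t ∈ range (S + 1), (2 * η t)⁻¹ * (‖W t - U t‖ ^ 2 - ‖W (t + 1) - U t‖ ^ 2)
          + ∑ t ∈ range (S + 1), η t / 2 * ‖G t‖ ^ 2 := by
        rw [← sum_add_distrib]
        exact sum_le_sum fun t _ => hstep t
    _ ≤ (2 * η S)⁻¹ * (D ^ 2 + 2 * D * ∑ t ∈ range S, ‖U (t + 1) - U t‖)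
          + ∑ t ∈ range (S + 1), η t / 2 * ‖G t‖ ^ 2 := by gcongr
    _ = _ := by field_simp

/-- Dynamic regret bound of online gradient descent with non-increasing
learning rates (Proposition 1). The space of `d × n` real matrices with the
Frobenius norm is modeled as `EuclideanSpace ℝ (Fin d × Fin n)`. -/
theorem ogd_dynamic_regret {d n T : ℕ} (hT : 0 < T)
    (Wset : Set (EuclideanSpace ℝ (Fin d × Fin n))) (D : ℝ)
    (hclosed : IsClosed Wset) (hconv : Convex ℝ Wset)
    (hdiam : ∀ w ∈ Wset, ∀ w' ∈ Wset, ‖w - w'‖ ≤ D)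
    (L : ℕ → EuclideanSpace ℝ (Fin d × Fin n) → ℝ)
    (hLconv : ∀ t, ConvexOn ℝ Wset (L t))
    (η : ℕ → ℝ) (hηpos : ∀ t, 0 < η t)
    (hηmono : ∀ s t, s ≤ t → η t ≤ η s)
    (W G : ℕ → EuclideanSpace ℝ (Fin d × Fin n))
    (hWmem : ∀ t, W t ∈ Wset)
    -- G t is a subgradient of L t at W t
    (hsub : ∀ t, ∀ u ∈ Wset, L t (W t) + (inner ℝ (G t) (u - W t) : ℝ) ≤ L t u)
    -- W (t+1) is the nearest-point projection of W t - η t • G t onto Wset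
    (hproj : ∀ t, ∀ u ∈ Wset,
      ‖W (t + 1) - (W t - η t • G t)‖ ≤ ‖u - (W t - η t • G t)‖)
    (U : ℕ → EuclideanSpace ℝ (Fin d × Fin n)) (hU : ∀ t, U t ∈ Wset) :
    ∑ t ∈ Finset.range T, (L t (W t) - L t (U t)) ≤
      (D / η (T - 1)) * (D / 2 + ∑ t ∈ Finset.range (T - 1), ‖U (t + 1) - U t‖)
        + ∑ t ∈ Finset.range T, (η t / 2) * ‖G t‖ ^ 2 :=
  ogd_dynamic_regret_general Wset D hconv hdiam L η hηpos hηmono W G hWmem hsub hproj U hU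
end

section
/- The multiclass smooth hinge loss satisfies the self-bounding property with constant M = 4: for every W, there is a subgradient G(W) of L(W) = φ(m(W)) with ‖G(W)‖_F² ≤ 8 L(W), where φ(m) = 1 − 2m for m ≤ 0, φ(m) = max{1−m,0}² for m > 0, and m(W) = ⟨e^{y}, Wx⟩ − max_{y'≠y} ⟨e^{y'}, Wx⟩ with ‖x‖₂ ≤ 1. -/
/-!
Let `ỹ` maximise the competitor scores `(W x)_{y'}`, `y' ≠ y`. The margin is bounded above by
the linear functional `ℓ(V) = (V x)_y - (V x)_ỹ`, with equality at `W`. Since `φ` is convex and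
nonincreasing, its tangent line at `m(W)` composed with `m ≤ ℓ` shows that
`G = φ'(m(W)) (e^y - e^ỹ) xᵀ` is a subgradient. Finally `‖G‖_F² = 2 φ'(m)² ‖x‖² ≤ 2 φ'(m)²`,
and `φ'² ≤ 4 φ` pointwise.
-/

open Matrix

noncomputable def smoothHinge (m : ℝ) : ℝ :=
  if m ≤ 0 then 1 - 2 * m else max (1 - m) 0 ^ 2

noncomputable def smoothHingeDeriv (m : ℝ) : ℝ :=
  if m ≤ 0 then -2 else -2 * max (1 - m) 0

lemma smoothHingeDeriv_nonpos (m : ℝ) : smoothHingeDeriv m ≤ 0 := by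
  unfold smoothHingeDeriv
  split_ifs <;> nlinarith [le_max_right (1 - m) 0]

lemma smoothHinge_add_deriv_mul_le (m τ : ℝ) :
    smoothHinge m + smoothHingeDeriv m * (τ - m) ≤ smoothHinge τ := by
  unfold smoothHinge smoothHingeDeriv
  rcases le_total (1 - m) 0 with hm | hm <;> rcases le_total (1 - τ) 0 with hτ | hτ <;>
    simp only [max_eq_left, max_eq_right, hm, hτ] <;> split_ifs <;> nlinarith [sq_nonneg (τ - m)]

lemma smoothHingeDeriv_sq_le (m : ℝ) : smoothHingeDeriv m ^ 2 ≤ 4 * smoothHinge m := by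
  unfold smoothHinge smoothHingeDeriv
  split_ifs <;> nlinarith [le_max_right (1 - m) 0]

lemma Matrix.sum_sum_vecMulVec_mul {ι κ : Type*} [Fintype ι] [Fintype κ] (u : ι → ℝ) (v : κ → ℝ)
    (A : Matrix ι κ ℝ) : ∑ i, ∑ j, vecMulVec u v i j * A i j = u ⬝ᵥ (A *ᵥ v) := by
  simp only [vecMulVec_apply, dotProduct, mulVec, Finset.mul_sum]
  exact Finset.sum_congr rfl fun i _ => Finset.sum_congr rfl fun j _ => by ring

lemma Matrix.sum_sum_vecMulVec_sq {ι κ : Type*} [Fintype ι] [Fintype κ] (u : ι → ℝ) (v : κ → ℝ) :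
    ∑ i, ∑ j, vecMulVec u v i j ^ 2 = (∑ i, u i ^ 2) * ∑ j, v j ^ 2 := by
  simp only [vecMulVec_apply, mul_pow, Finset.sum_mul_sum]

lemma sum_single_sub_single_sq {ι : Type*} [Fintype ι] [DecidableEq ι] {a b : ι} (hab : a ≠ b) :
    ∑ i, (Pi.single a 1 - Pi.single b 1 : ι → ℝ) i ^ 2 = 2 := by
  rw [Fintype.sum_eq_add a b hab]
  · norm_num [hab, hab.symm]
  · rintro i ⟨hia, hib⟩
    simp [hia, hib]

theorem smooth_hinge_self_bounding_general {K n : ℕ} (y : Fin K)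
    (x : Fin n → ℝ) (hx : ∑ j, x j ^ 2 ≤ 1)
    (hne : (Finset.univ.erase y).Nonempty)
    (φ : ℝ → ℝ)
    (hφ : ∀ m : ℝ, φ m = if m ≤ 0 then 1 - 2 * m else max (1 - m) 0 ^ 2)
    (margin : Matrix (Fin K) (Fin n) ℝ → ℝ)
    (hmargin : ∀ W, margin W =
      W.mulVec x y - (Finset.univ.erase y).sup' hne (fun y' => W.mulVec x y'))
    (L : Matrix (Fin K) (Fin n) ℝ → ℝ) (hL : ∀ W, L W = φ (margin W)) :
    ∀ W, ∃ G : Matrix (Fin K) (Fin n) ℝ,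
      (∀ V, L W + ∑ i, ∑ j, G i j * (V i j - W i j) ≤ L V) ∧
      ∑ i, ∑ j, G i j ^ 2 ≤ 8 * L W := by
  obtain rfl : φ = smoothHinge := funext hφ
  intro W
  obtain ⟨t, ht, hWt⟩ := Finset.exists_mem_eq_sup' hne (fun y' => (W *ᵥ x) y')
  set c := smoothHingeDeriv (margin W)
  have hinner (V : Matrix (Fin K) (Fin n) ℝ) :
      ∑ i, ∑ j, vecMulVec (c • (Pi.single y 1 - Pi.single t 1)) x i j * (V - W) i j =
        c * (((V *ᵥ x) y - (V *ᵥ x) t) - margin W) := by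
    rw [sum_sum_vecMulVec_mul, smul_dotProduct, sub_dotProduct, single_dotProduct,
      single_dotProduct, hmargin, hWt, sub_mulVec]
    simp only [Pi.sub_apply, smul_eq_mul]
    ring
  refine ⟨vecMulVec (c • (Pi.single y 1 - Pi.single t 1)) x, fun V => ?_, ?_⟩
  · have hmarginV : margin V ≤ (V *ᵥ x) y - (V *ᵥ x) t := by
      rw [hmargin]
      exact sub_le_sub_left (Finset.le_sup' (fun y' => (V *ᵥ x) y') ht) _
    calc L W + ∑ i, ∑ j, vecMulVec (c • (Pi.single y 1 - Pi.single t 1)) x i j * (V i j - W i j)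
        = smoothHinge (margin W) + c * (((V *ᵥ x) y - (V *ᵥ x) t) - margin W) := by
          rw [hL, ← hinner]; rfl
      _ ≤ smoothHinge (margin W) + c * (margin V - margin W) :=
          add_le_add_right (mul_le_mul_of_nonpos_left (sub_le_sub_right hmarginV _)
            (smoothHingeDeriv_nonpos _)) _
      _ ≤ L V := (hL V).symm ▸ smoothHinge_add_deriv_mul_le _ _
  · rw [sum_sum_vecMulVec_sq, hL]
    simp only [Pi.smul_apply, smul_eq_mul, mul_pow, ← Finset.mul_sum,
      sum_single_sub_single_sq (Finset.ne_of_mem_erase ht).symm]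
    nlinarith [smoothHingeDeriv_sq_le (margin W), sq_nonneg c]

/-- The multiclass smooth hinge loss is self-bounding with constant `M = 4`:
for every `W` there is a subgradient `G` of `L(W) = φ(m(W))` with
`‖G‖_F² ≤ 8 L(W)`, where the Frobenius quantities are written as explicit
sums. -/
theorem smooth_hinge_self_bounding {K n : ℕ} (hK : 2 ≤ K) (y : Fin K)
    (x : Fin n → ℝ) (hx : ∑ j, x j ^ 2 ≤ 1)
    (hne : (Finset.univ.erase y).Nonempty)
    (φ : ℝ → ℝ)
    (hφ : ∀ m : ℝ, φ m = if m ≤ 0 then 1 - 2 * m else max (1 - m) 0 ^ 2)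
    (margin : Matrix (Fin K) (Fin n) ℝ → ℝ)
    (hmargin : ∀ W, margin W =
      W.mulVec x y - (Finset.univ.erase y).sup' hne (fun y' => W.mulVec x y'))
    (L : Matrix (Fin K) (Fin n) ℝ → ℝ) (hL : ∀ W, L W = φ (margin W)) :
    ∀ W, ∃ G : Matrix (Fin K) (Fin n) ℝ,
      (∀ V, L W + ∑ i, ∑ j, G i j * (V i j - W i j) ≤ L V) ∧
      ∑ i, ∑ j, G i j ^ 2 ≤ 8 * L W :=
  smooth_hinge_self_bounding_general y x hx hne φ hφ margin hmargin L hL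
end

section
/- The univariate function φ : ℝ → ℝ defined by φ(m) = 1 − 2m for m ≤ 0 and φ(m) = max{1−m, 0}² for m > 0 is convex, non-increasing, non-negative, and continuous; moreover every element g of its subdifferential satisfies g² ≤ 8 φ(m). -/
/-!
Writing `q t = max t 0 ^ 2`, the loss is `φ m = q (1 - m) - q (-m)`. Since `q` is differentiable
with `q' t = 2 max t 0`, `φ` is differentiable with derivative
`φ' m = 2 max (-m) 0 - 2 max (1 - m) 0`, which is `-2`, `-2 (1 - m)` and `0` on the three pieces.
This derivative is non-decreasing and non-positive, giving convexity and monotonicity, and the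
only subgradient of a differentiable function is its derivative, for which `φ' m ^ 2 ≤ 8 φ m`
is checked piecewise.
-/

open Set

theorem hasDerivAt_max_zero_sq (t : ℝ) :
    HasDerivAt (fun s : ℝ => max s 0 ^ 2) (2 * max t 0) t := by
  have hsq : ∀ s : ℝ, HasDerivAt (fun s : ℝ => s ^ 2) (2 * s) s := fun s => by
    simpa using hasDerivAt_pow 2 s
  have h_Iic : EqOn (fun s : ℝ => max s 0 ^ 2) (fun _ => 0) (Iic 0) := fun s hs => by
    simp [max_eq_right (mem_Iic.mp hs)]
  have h_Ici : EqOn (fun s : ℝ => max s 0 ^ 2) (fun s => s ^ 2) (Ici 0) := fun s hs => by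
    simp [max_eq_left (mem_Ici.mp hs)]
  rcases lt_trichotomy t 0 with ht | rfl | ht
  · rw [max_eq_right ht.le, mul_zero]
    exact (hasDerivAt_const t 0).congr_of_eventuallyEq
      (Filter.eventuallyEq_of_mem (Iic_mem_nhds ht) h_Iic)
  · have h_left : HasDerivWithinAt (fun s : ℝ => max s 0 ^ 2) 0 (Iic 0) 0 :=
      (hasDerivWithinAt_const 0 _ 0).congr h_Iic (h_Iic self_mem_Iic)
    have h_right : HasDerivWithinAt (fun s : ℝ => max s 0 ^ 2) 0 (Ici 0) 0 := by
      simpa using (hsq 0).hasDerivWithinAt.congr h_Ici (h_Ici self_mem_Ici)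
    simpa [Iic_union_Ici] using h_left.union h_right
  · rw [max_eq_left ht.le]
    exact (hsq t).congr_of_eventuallyEq
      (Filter.eventuallyEq_of_mem (Ici_mem_nhds ht) h_Ici)

theorem HasDerivAt.eq_of_subgradient {f : ℝ → ℝ} {f' x g : ℝ} (hf : HasDerivAt f f' x)
    (hg : ∀ y, f x + g * (y - x) ≤ f y) : g = f' := by
  have hmin : IsLocalMin (fun y => f y - g * (y - x)) x :=
    Filter.Eventually.of_forall fun y => by
      simp only [sub_self, mul_zero, sub_zero]
      linarith [hg y]
  have hderiv : HasDerivAt (fun y => f y - g * (y - x)) (f' - g) x := by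
    simpa using hf.fun_sub (((hasDerivAt_id x).sub_const x).const_mul g)
  linarith [hmin.hasDerivAt_eq_zero hderiv]

namespace SmoothHinge

noncomputable def loss (m : ℝ) : ℝ := max (1 - m) 0 ^ 2 - max (-m) 0 ^ 2

noncomputable def lossDeriv (m : ℝ) : ℝ := 2 * max (-m) 0 - 2 * max (1 - m) 0

theorem loss_eq_ite (m : ℝ) :
    loss m = if m ≤ 0 then 1 - 2 * m else max (1 - m) 0 ^ 2 := by
  unfold loss
  split_ifs with hm
  · rw [max_eq_left (by linarith), max_eq_left (by linarith)]
    ring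
  · rw [max_eq_right (neg_nonpos.mpr (le_of_not_ge hm))]
    ring

theorem hasDerivAt_loss (m : ℝ) : HasDerivAt loss (lossDeriv m) m := by
  have h₁ : HasDerivAt (fun m => max (1 - m) 0 ^ 2) (2 * max (1 - m) 0 * -1) m :=
    (hasDerivAt_max_zero_sq (1 - m)).comp m ((hasDerivAt_id m).const_sub 1)
  have h₂ : HasDerivAt (fun m => max (-m) 0 ^ 2) (2 * max (-m) 0 * -1) m :=
    (hasDerivAt_max_zero_sq (-m)).comp m (hasDerivAt_neg m)
  exact (h₁.fun_sub h₂).congr_deriv (by rw [lossDeriv]; ring)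

theorem differentiable_loss : Differentiable ℝ loss := fun m =>
  (hasDerivAt_loss m).differentiableAt

theorem deriv_loss : deriv loss = lossDeriv := funext fun m => (hasDerivAt_loss m).deriv

theorem monotone_lossDeriv : Monotone lossDeriv := fun a b hab => by
  simp only [lossDeriv, max_def]
  split_ifs <;> linarith

theorem lossDeriv_nonpos (m : ℝ) : lossDeriv m ≤ 0 := by
  simp only [lossDeriv, max_def]
  split_ifs <;> linarith

theorem loss_nonneg (m : ℝ) : 0 ≤ loss m := by
  rw [loss_eq_ite]
  split_ifs with hm
  · linarith
  · positivity

theorem lossDeriv_sq_le (m : ℝ) : lossDeriv m ^ 2 ≤ 8 * loss m := by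
  rw [loss_eq_ite]
  simp only [lossDeriv, max_def]
  split_ifs <;> nlinarith

end SmoothHinge

open SmoothHinge in
/-- The scalar smooth hinge loss `φ` is convex, non-increasing, non-negative
and continuous, and every subgradient `g` of `φ` at any point satisfies
`g² ≤ 8 φ(m)`. -/
theorem scalar_smooth_hinge_properties (φ : ℝ → ℝ)
    (hφ : ∀ m : ℝ, φ m = if m ≤ 0 then 1 - 2 * m else max (1 - m) 0 ^ 2) :
    ConvexOn ℝ Set.univ φ ∧ Antitone φ ∧ (∀ m, 0 ≤ φ m) ∧ Continuous φ ∧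
      ∀ m g : ℝ, (∀ m', φ m + g * (m' - m) ≤ φ m') → g ^ 2 ≤ 8 * φ m := by
  obtain rfl : φ = loss := funext fun m => (hφ m).trans (loss_eq_ite m).symm
  refine ⟨?_, ?_, loss_nonneg, differentiable_loss.continuous, fun m g hg => ?_⟩
  · exact Monotone.convexOn_univ_of_deriv differentiable_loss (deriv_loss ▸ monotone_lossDeriv)
  · exact antitone_of_deriv_nonpos differentiable_loss fun m => deriv_loss ▸ lossDeriv_nonpos m
  · rw [(hasDerivAt_loss m).eq_of_subgradient hg]
    exact lossDeriv_sq_le m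
end

section
/- Let τ(μ) = −min_{ŷ∈Ŷ} ⟨μ, ℓ^ρ(ŷ)⟩ over a finite prediction set Ŷ, and Ω_τ = Ω + τ. Then for any θ, (Ω + τ)*(θ) = min_{π ∈ Δ^N} Ω*(θ + L^ρ π), where L^ρ is the matrix whose columns are ℓ^ρ(ŷ) and Δ^N is the probability simplex over Ŷ. In particular Ω_τ*(θ) = Ω*(θ + L^ρ π(θ)) for any minimizer π(θ). -/
/-!
Play the zero-sum game on `stdSimplex ℝ (Fin N) × C` with payoff
`p(π, μ) = ⟪θ + L π, μ⟫ - Ω μ`, so that `Ω*(θ + L π) = sup_μ p(π, μ)`. The payoff is affine in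
`π` and concave, upper semicontinuous in `μ`; both sets are compact and convex, so Sion's minimax
theorem gives a saddle point `(π, μ₀)`. Because `-τ μ = min_i ⟪μ, ℓρ i⟫`, the minimum of
`p(·, μ)` over the vertices of the simplex is `⟪θ, μ⟫ - (Ω + τ) μ`. Hence every `p(π', ·)`
dominates the integrand of `(Ω + τ)*(θ)`, while at the saddle point
`Ω*(θ + L π) ≤ min_i p(eᵢ, μ₀) = ⟪θ, μ₀⟫ - (Ω + τ) μ₀ ≤ (Ω + τ)*(θ)`.
-/

open Finset Set
open scoped RealInnerProductSpace

theorem inf'_le_sum_mul_of_mem_stdSimplex {ι : Type*} [Fintype ι]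
    (hne : (univ : Finset ι).Nonempty) {π : ι → ℝ} (hπ : π ∈ stdSimplex ℝ ι) (g : ι → ℝ) :
    univ.inf' hne g ≤ ∑ i, π i * g i :=
  calc univ.inf' hne g = ∑ i, π i * univ.inf' hne g := by rw [← sum_mul, hπ.2, one_mul]
    _ ≤ ∑ i, π i * g i :=
      sum_le_sum fun i _ => mul_le_mul_of_nonneg_left (inf'_le _ (mem_univ i)) (hπ.1 i)

section SimplexPayoff

variable {E ι : Type*} [NormedAddCommGroup E] [InnerProductSpace ℝ E] [Fintype ι]

def simplexPayoff (Ω : E → ℝ) (ℓ : ι → E) (θ : E) (π : ι → ℝ) (μ : E) : ℝ :=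
  ⟪θ + ∑ i, π i • ℓ i, μ⟫ - Ω μ

variable (Ω : E → ℝ) (ℓ : ι → E) (θ : E)

theorem simplexPayoff_single [DecidableEq ι] (i : ι) (μ : E) :
    simplexPayoff Ω ℓ θ (Pi.single i 1) μ = ⟪θ, μ⟫ - Ω μ + ⟪μ, ℓ i⟫ := by
  simp only [simplexPayoff, Pi.single_apply, ite_smul, one_smul, zero_smul, Fintype.sum_ite_eq',
    inner_add_left, real_inner_comm (ℓ i) μ]
  ring

theorem simplexPayoff_eq_sum_mul_single [DecidableEq ι] {π : ι → ℝ} (hπ : ∑ i, π i = 1)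
    (μ : E) : simplexPayoff Ω ℓ θ π μ = ∑ i, π i * simplexPayoff Ω ℓ θ (Pi.single i 1) μ := by
  simp_rw [simplexPayoff_single, mul_add, sum_add_distrib, ← sum_mul, hπ, one_mul]
  simp only [simplexPayoff, real_inner_comm μ, inner_add_right, inner_sum, real_inner_smul_right]
  ring

theorem inf'_simplexPayoff_single [DecidableEq ι] (hne : (univ : Finset ι).Nonempty) (μ : E) :
    univ.inf' hne (fun i => simplexPayoff Ω ℓ θ (Pi.single i 1) μ)
      = ⟪θ, μ⟫ - (Ω μ + -univ.inf' hne fun i => ⟪μ, ℓ i⟫) := by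
  have hshift := map_finset_inf' (OrderIso.addLeft (⟪θ, μ⟫ - Ω μ)) hne fun i => ⟪μ, ℓ i⟫
  simp only [OrderIso.addLeft_apply, Function.comp_def] at hshift
  simp only [simplexPayoff_single, ← hshift]
  ring

theorem inf'_simplexPayoff_single_le [DecidableEq ι] (hne : (univ : Finset ι).Nonempty)
    {π : ι → ℝ} (hπ : π ∈ stdSimplex ℝ ι) (μ : E) :
    univ.inf' hne (fun i => simplexPayoff Ω ℓ θ (Pi.single i 1) μ) ≤ simplexPayoff Ω ℓ θ π μ :=
  simplexPayoff_eq_sum_mul_single Ω ℓ θ hπ.2 μ ▸ inf'_le_sum_mul_of_mem_stdSimplex hne hπ _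

theorem continuous_simplexPayoff_left (μ : E) :
    Continuous fun π => simplexPayoff Ω ℓ θ π μ := by
  unfold simplexPayoff
  fun_prop

theorem convexOn_simplexPayoff_left (μ : E) :
    ConvexOn ℝ univ fun π => simplexPayoff Ω ℓ θ π μ := by
  have heq : (fun π => simplexPayoff Ω ℓ θ π μ)
      = ((innerₛₗ ℝ μ).comp (Fintype.linearCombination ℝ ℓ) : (ι → ℝ) → ℝ)
        + fun _ => ⟪θ, μ⟫ - Ω μ := by
    funext π
    simp only [simplexPayoff, Pi.add_apply, LinearMap.comp_apply, innerₛₗ_apply_apply,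
      Fintype.linearCombination_apply, inner_add_left, real_inner_comm _ μ]
    ring
  exact heq ▸ (LinearMap.convexOn _ convex_univ).add_const _

theorem upperSemicontinuousOn_simplexPayoff_right {C : Set E}
    (hΩ : LowerSemicontinuousOn Ω C) (π : ι → ℝ) :
    UpperSemicontinuousOn (simplexPayoff Ω ℓ θ π) C := by
  have hneg : UpperSemicontinuousOn (Neg.neg ∘ Ω) C :=
    continuous_neg.comp_lowerSemicontinuousOn_antitone hΩ fun _ _ => neg_le_neg
  have hinner : UpperSemicontinuousOn (fun μ => ⟪θ + ∑ i, π i • ℓ i, μ⟫) C :=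
    (continuous_const.inner continuous_id).upperSemicontinuous.upperSemicontinuousOn _
  unfold simplexPayoff
  simp_rw [sub_eq_add_neg]
  exact hinner.add hneg

theorem concaveOn_simplexPayoff_right {C : Set E} (hC : Convex ℝ C) (hΩ : ConvexOn ℝ C Ω)
    (π : ι → ℝ) : ConcaveOn ℝ C (simplexPayoff Ω ℓ θ π) :=
  ((innerₛₗ ℝ (θ + ∑ i, π i • ℓ i)).concaveOn hC).sub hΩ

theorem exists_isSaddlePointOn_simplexPayoff [Nonempty ι] {C : Set E} (hCne : C.Nonempty)
    (hCcomp : IsCompact C) (hCconv : Convex ℝ C) (hΩconv : ConvexOn ℝ C Ω)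
    (hΩlsc : LowerSemicontinuousOn Ω C) :
    ∃ π ∈ stdSimplex ℝ ι, ∃ μ ∈ C,
      IsSaddlePointOn (stdSimplex ℝ ι) C (simplexPayoff Ω ℓ θ) π μ :=
  Sion.exists_isSaddlePointOn (isPathConnected_stdSimplex ι).nonempty
    (convex_stdSimplex ℝ ι) (isCompact_stdSimplex ℝ ι)
    (fun μ _ =>
      (continuous_simplexPayoff_left Ω ℓ θ μ).lowerSemicontinuous.lowerSemicontinuousOn _)
    (fun μ _ => ((convexOn_simplexPayoff_left Ω ℓ θ μ).subset (subset_univ _)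
      (convex_stdSimplex ℝ ι)).quasiconvexOn)
    hCconv hCne hCcomp
    (fun π _ => upperSemicontinuousOn_simplexPayoff_right Ω ℓ θ hΩlsc π)
    (fun π _ => (concaveOn_simplexPayoff_right Ω ℓ θ hCconv hΩconv π).quasiconcaveOn)

end SimplexPayoff

theorem conv_fenchel_young_conjugate_identity_general {d N : ℕ}
    (hne : (Finset.univ : Finset (Fin N)).Nonempty)
    (ℓρ : Fin N → EuclideanSpace ℝ (Fin d))
    (τ : EuclideanSpace ℝ (Fin d) → ℝ)
    (hτ : ∀ μ, τ μ = - Finset.univ.inf' hne (fun yh => (inner ℝ μ (ℓρ yh) : ℝ)))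
    (C : Set (EuclideanSpace ℝ (Fin d)))
    (hCne : C.Nonempty) (hCcomp : IsCompact C) (hCconv : Convex ℝ C)
    (Ω : EuclideanSpace ℝ (Fin d) → ℝ)
    (hΩconv : ConvexOn ℝ C Ω) (hΩlsc : LowerSemicontinuousOn Ω C)
    (Ωstar Ωτstar : EuclideanSpace ℝ (Fin d) → ℝ)
    (hstar : ∀ θ, IsLUB ((fun μ => (inner ℝ θ μ : ℝ) - Ω μ) '' C) (Ωstar θ))
    (hτstar : ∀ θ,
      IsLUB ((fun μ => (inner ℝ θ μ : ℝ) - (Ω μ + τ μ)) '' C) (Ωτstar θ))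
    (θ : EuclideanSpace ℝ (Fin d)) :
    ∃ π ∈ stdSimplex ℝ (Fin N),
      Ωτstar θ = Ωstar (θ + ∑ yh, π yh • ℓρ yh) ∧
      ∀ π' ∈ stdSimplex ℝ (Fin N),
        Ωτstar θ ≤ Ωstar (θ + ∑ yh, π' yh • ℓρ yh) := by
  have : Nonempty (Fin N) := univ_nonempty_iff.mp hne
  obtain ⟨π, hπ, μ₀, hμ₀, hsaddle⟩ :=
    exists_isSaddlePointOn_simplexPayoff Ω ℓρ θ hCne hCcomp hCconv hΩconv hΩlsc
  have hτ' : ∀ μ, ⟪θ, μ⟫ - (Ω μ + τ μ)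
      = univ.inf' hne fun i => simplexPayoff Ω ℓρ θ (Pi.single i 1) μ := fun μ => by
    rw [hτ, inf'_simplexPayoff_single]
  have hlower : ∀ π' ∈ stdSimplex ℝ (Fin N), Ωτstar θ ≤ Ωstar (θ + ∑ i, π' i • ℓρ i) :=
    fun π' hπ' => (hτstar θ).2 <| forall_mem_image.2 fun μ hμ =>
      (hτ' μ ▸ inf'_simplexPayoff_single_le Ω ℓρ θ hne hπ' μ).trans
        ((hstar _).1 (mem_image_of_mem _ hμ))
  have hupper : Ωstar (θ + ∑ i, π i • ℓρ i) ≤ Ωτstar θ :=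
    (hstar _).2 <| forall_mem_image.2 fun μ hμ =>
      calc simplexPayoff Ω ℓρ θ π μ
          ≤ univ.inf' hne fun i => simplexPayoff Ω ℓρ θ (Pi.single i 1) μ₀ :=
            le_inf' _ _ fun i _ => hsaddle _ (single_mem_stdSimplex ℝ i) μ hμ
        _ = ⟪θ, μ₀⟫ - (Ω μ₀ + τ μ₀) := (hτ' μ₀).symm
        _ ≤ Ωτstar θ := (hτstar θ).1 (mem_image_of_mem _ hμ₀)
  exact ⟨π, hπ, (hlower π hπ).antisymm hupper, hlower⟩

/-- Conjugate of the sum `Ω + τ`, where `τ(μ) = −min_{yh} ⟨μ, ℓ^ρ(yh)⟩`: it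
equals the minimum over the probability simplex of `Ω*(θ + L^ρ π)`, and the
minimum is attained. -/
theorem conv_fenchel_young_conjugate_identity {d N : ℕ} (hN : 0 < N)
    (hne : (Finset.univ : Finset (Fin N)).Nonempty)
    (ℓρ : Fin N → EuclideanSpace ℝ (Fin d))
    (τ : EuclideanSpace ℝ (Fin d) → ℝ)
    (hτ : ∀ μ, τ μ = - Finset.univ.inf' hne (fun yh => (inner ℝ μ (ℓρ yh) : ℝ)))
    (C : Set (EuclideanSpace ℝ (Fin d)))
    (hCne : C.Nonempty) (hCcomp : IsCompact C) (hCconv : Convex ℝ C)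
    (Ω : EuclideanSpace ℝ (Fin d) → ℝ)
    (hΩconv : ConvexOn ℝ C Ω) (hΩlsc : LowerSemicontinuousOn Ω C)
    (Ωstar Ωτstar : EuclideanSpace ℝ (Fin d) → ℝ)
    (hstar : ∀ θ, IsLUB ((fun μ => (inner ℝ θ μ : ℝ) - Ω μ) '' C) (Ωstar θ))
    (hτstar : ∀ θ,
      IsLUB ((fun μ => (inner ℝ θ μ : ℝ) - (Ω μ + τ μ)) '' C) (Ωτstar θ))
    (θ : EuclideanSpace ℝ (Fin d)) :
    ∃ π ∈ stdSimplex ℝ (Fin N),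
      Ωτstar θ = Ωstar (θ + ∑ yh, π yh • ℓρ yh) ∧
      ∀ π' ∈ stdSimplex ℝ (Fin N),
        Ωτstar θ ≤ Ωstar (θ + ∑ yh, π' yh • ℓρ yh) :=
  conv_fenchel_young_conjugate_identity_general hne ℓρ τ hτ C hCne hCcomp hCconv Ω hΩconv hΩlsc
    Ωstar Ωτstar hstar hτstar θ
end

section
/- Target–surrogate relation for convolutional Fenchel–Young losses: with π(θ) ∈ argmin_{π∈Δ^N} Ω*(θ + L^ρ π) and the target loss decomposition ℓ(ŷ, y) = ⟨ρ(y), ℓ^ρ(ŷ)⟩ + c(y) with min_{ŷ} ℓ(ŷ, y) = 0, we have E_{ŷ∼π(θ)}[ℓ(ŷ, y)] = L_{Ω_τ}(θ, y) − L_Ω(θ + L^ρ π(θ), y), where L_{Ω_τ} and L_Ω are the Fenchel–Young losses generated by Ω_τ = Ω + τ and Ω respectively. -/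
/-!
Since `π(θ)` is a probability vector, the expected target loss is `⟨ρ(y), L^ρ π(θ)⟩ + c(y)`.
By the conjugate identity the `Ω*`-terms of the two Fenchel–Young losses cancel, leaving
`τ(ρ(y)) + ⟨L^ρ π(θ), ρ(y)⟩`, and `τ(ρ(y)) = c(y)` because the target loss has minimum zero.
-/

open Finset RealInnerProductSpace

theorem Finset.inf'_add {ι G : Type*} [AddGroup G] [LinearOrder G] [AddRightMono G]
    (s : Finset ι) (f : ι → G) (a : G) (hs : s.Nonempty) :
    s.inf' hs f + a = s.inf' hs fun i => f i + a :=
  map_finset_inf' (OrderIso.addRight a) hs f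

section Decomposition

variable {ι E : Type*} [NormedAddCommGroup E] [InnerProductSpace ℝ E]
  {ℓ : ι → ℝ} {μ : E} {ℓρ : ι → E} {c : ℝ}

theorem neg_inf'_inner_eq_of_inf'_eq_zero {s : Finset ι} (hs : s.Nonempty)
    (hdecomp : ∀ i, ℓ i = ⟪μ, ℓρ i⟫ + c) (hmin : s.inf' hs ℓ = 0) :
    -s.inf' hs (fun i => ⟪μ, ℓρ i⟫) = c := by
  have hshift : s.inf' hs ℓ = s.inf' hs (fun i => ⟪μ, ℓρ i⟫) + c := by
    simp_rw [hdecomp]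
    exact (Finset.inf'_add s _ c hs).symm
  linarith

theorem sum_mul_eq_inner_sum_smul_add [Fintype ι] {π : ι → ℝ} (hπ : ∑ i, π i = 1)
    (hdecomp : ∀ i, ℓ i = ⟪μ, ℓρ i⟫ + c) :
    ∑ i, π i * ℓ i = ⟪μ, ∑ i, π i • ℓρ i⟫ + c := by
  simp_rw [hdecomp, inner_sum, real_inner_smul_right, mul_add, sum_add_distrib, ← sum_mul, hπ,
    one_mul]

end Decomposition

theorem target_surrogate_relation_general {d K N : ℕ}
    (hne : (Finset.univ : Finset (Fin N)).Nonempty)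
    (ρ : Fin K → EuclideanSpace ℝ (Fin d))
    (ℓρ : Fin N → EuclideanSpace ℝ (Fin d))
    (c : Fin K → ℝ)
    (ℓ : Fin N → Fin K → ℝ)
    -- (ρ, ℓ^ρ)-decomposition of the target loss
    (hdecomp : ∀ yh y, ℓ yh y = (inner ℝ (ρ y) (ℓρ yh) : ℝ) + c y)
    -- the target loss can take zero
    (hmin : ∀ y, Finset.univ.inf' hne (fun yh => ℓ yh y) = 0)
    (τ : EuclideanSpace ℝ (Fin d) → ℝ)
    (hτ : ∀ μ, τ μ = - Finset.univ.inf' hne (fun yh => (inner ℝ μ (ℓρ yh) : ℝ)))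
    (Ω Ωstar Ωτstar : EuclideanSpace ℝ (Fin d) → ℝ)
    (θ : EuclideanSpace ℝ (Fin d)) (y : Fin K)
    (π : Fin N → ℝ) (hπ : π ∈ stdSimplex ℝ (Fin N))
    -- the conjugate identity (Ω + τ)*(θ) = Ω*(θ + L^ρ π(θ))
    (hconj : Ωτstar θ = Ωstar (θ + ∑ yh, π yh • ℓρ yh))
    (LΩτ LΩ : EuclideanSpace ℝ (Fin d) → Fin K → ℝ)
    (hLΩτ : ∀ ξ y', LΩτ ξ y' =
      Ωτstar ξ + (Ω (ρ y') + τ (ρ y')) - (inner ℝ ξ (ρ y') : ℝ))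
    (hLΩ : ∀ ξ y', LΩ ξ y' = Ωstar ξ + Ω (ρ y') - (inner ℝ ξ (ρ y') : ℝ)) :
    ∑ yh, π yh * ℓ yh y = LΩτ θ y - LΩ (θ + ∑ yh, π yh • ℓρ yh) y := by
  have hτy : τ (ρ y) = c y :=
    (hτ (ρ y)).trans (neg_inf'_inner_eq_of_inf'_eq_zero hne (hdecomp · y) (hmin y))
  rw [sum_mul_eq_inner_sum_smul_add hπ.2 (hdecomp · y), hLΩτ, hLΩ, hconj, hτy, inner_add_left,
    real_inner_comm _ (ρ y)]
  ring

/-- Target–surrogate relation for convolutional Fenchel–Young losses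
(Lemma 1): with decoding distribution `π(θ)` minimizing `Ω*(θ + L^ρ π)` over
the simplex, the expected target loss equals
`L_{Ω_τ}(θ, y) − L_Ω(θ + L^ρ π(θ), y)`. -/
theorem target_surrogate_relation {d K N : ℕ}
    (hne : (Finset.univ : Finset (Fin N)).Nonempty)
    (ρ : Fin K → EuclideanSpace ℝ (Fin d))
    (ℓρ : Fin N → EuclideanSpace ℝ (Fin d))
    (c : Fin K → ℝ)
    (ℓ : Fin N → Fin K → ℝ)
    -- (ρ, ℓ^ρ)-decomposition of the target loss
    (hdecomp : ∀ yh y, ℓ yh y = (inner ℝ (ρ y) (ℓρ yh) : ℝ) + c y)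
    -- the target loss can take zero
    (hmin : ∀ y, Finset.univ.inf' hne (fun yh => ℓ yh y) = 0)
    (τ : EuclideanSpace ℝ (Fin d) → ℝ)
    (hτ : ∀ μ, τ μ = - Finset.univ.inf' hne (fun yh => (inner ℝ μ (ℓρ yh) : ℝ)))
    (Ω Ωstar Ωτstar : EuclideanSpace ℝ (Fin d) → ℝ)
    (θ : EuclideanSpace ℝ (Fin d)) (y : Fin K)
    (π : Fin N → ℝ) (hπ : π ∈ stdSimplex ℝ (Fin N))
    -- π minimizes Ω*(θ + L^ρ ·) over the simplex
    (hminimizer : ∀ π' ∈ stdSimplex ℝ (Fin N),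
      Ωstar (θ + ∑ yh, π yh • ℓρ yh) ≤ Ωstar (θ + ∑ yh, π' yh • ℓρ yh))
    -- the conjugate identity (Ω + τ)*(θ) = Ω*(θ + L^ρ π(θ))
    (hconj : Ωτstar θ = Ωstar (θ + ∑ yh, π yh • ℓρ yh))
    (LΩτ LΩ : EuclideanSpace ℝ (Fin d) → Fin K → ℝ)
    (hLΩτ : ∀ ξ y', LΩτ ξ y' =
      Ωτstar ξ + (Ω (ρ y') + τ (ρ y')) - (inner ℝ ξ (ρ y') : ℝ))
    (hLΩ : ∀ ξ y', LΩ ξ y' = Ωstar ξ + Ω (ρ y') - (inner ℝ ξ (ρ y') : ℝ)) :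
    ∑ yh, π yh * ℓ yh y = LΩτ θ y - LΩ (θ + ∑ yh, π yh • ℓρ yh) y :=
  target_surrogate_relation_general hne ρ ℓρ c ℓ hdecomp hmin τ hτ Ω Ωstar Ωτstar θ y π hπ hconj LΩτ
    LΩ hLΩτ hLΩ
end

section
/- Run OGD on convolutional Fenchel–Young losses L_t(W) = L_{Ω_τ}(Wx_t, y_t) with ‖x_t‖₂ ≤ 1 and non-increasing learning rates η_t satisfying λ ≤ η_t ≤ 2(L_t(W_t) − e_t)/‖G_t‖_F², where e_t = E_{ŷ∼π(θ_t)}[ℓ(ŷ, y_t)]. Then for any comparators U_1,…,U_T in a convex set of diameter D, Σ_{t=1}^T e_t ≤ Σ_{t=1}^T L_t(U_t) + (D/λ)(D/2 + P_T) with P_T = Σ_{t=2}^T ‖U_t − U_{t−1}‖_F. Moreover, the range of admissible η_t is non-empty because L_t(W_t) − e_t ≥ (λ/2)‖G_t‖_F². -/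
/-!
The first claim is the chain `L_t(W_t) - e_t = S_t ≥ (λ/2) gnorm_t² ≥ (λ/2) ‖G_t‖²`.

For the regret bound, the usual one-step OGD inequality, in which the term `(η_t/2) ‖G_t‖²` is
absorbed by the upper bound on `η_t`, gives
`e_t ≤ L_t(U_t) + (‖W_t - U_t‖² - ‖W_{t+1} - U_t‖²) / (2η_t)`.
A moving comparator costs at most `2D ‖U_{t+1} - U_t‖` in the numerator per step, and since
`η_t` is non-increasing and at least `λ`, the sum telescopes to at most `D²/(2λ) + (D/λ) P_T`.
-/

open Finset
open scoped InnerProductSpace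

theorem Convex.norm_sub_le_of_isMinOn_norm_sub {F : Type*} [NormedAddCommGroup F]
    [InnerProductSpace ℝ F] {K : Set F} (hK : Convex ℝ K) {z p u : F} (hp : p ∈ K)
    (hmin : IsMinOn (‖· - z‖) K p) (hu : u ∈ K) : ‖p - u‖ ≤ ‖z - u‖ := by
  have : Nonempty K := ⟨⟨p, hp⟩⟩
  have hinf : ‖z - p‖ = ⨅ w : K, ‖z - w‖ := by
    have hbdd : BddBelow (Set.range fun w : K => ‖z - w‖) :=
      ⟨0, by rintro _ ⟨w, rfl⟩; exact norm_nonneg _⟩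
    refine le_antisymm (le_ciInf fun w => ?_) (ciInf_le hbdd ⟨p, hp⟩)
    simpa only [norm_sub_rev z] using isMinOn_iff.1 hmin w w.2
  have hobtuse : ⟪z - p, u - p⟫_ℝ ≤ 0 :=
    (norm_eq_iInf_iff_real_inner_le_zero hK hp).1 hinf u hu
  have hexpand : ‖z - u‖ ^ 2 = ‖p - u‖ ^ 2 - 2 * ⟪z - p, u - p⟫_ℝ + ‖z - p‖ ^ 2 := by
    rw [show z - u = (z - p) - (u - p) by abel, norm_sub_sq_real, norm_sub_rev u p]
    ring
  refine (pow_le_pow_iff_left₀ (norm_nonneg _) (norm_nonneg _) two_ne_zero).1 ?_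
  nlinarith [sq_nonneg ‖z - p‖]

theorem ogd_step_le {F : Type*} [NormedAddCommGroup F] [InnerProductSpace ℝ F]
    {f : F → ℝ} {w w' g u : F} {η e : ℝ} (hη : 0 < η)
    (hsub : f w + ⟪g, u - w⟫_ℝ ≤ f u) (hproj : ‖w' - u‖ ≤ ‖w - η • g - u‖)
    (hgap : η * ‖g‖ ^ 2 ≤ 2 * (f w - e)) :
    e ≤ f u + (‖w - u‖ ^ 2 - ‖w' - u‖ ^ 2) / (2 * η) := by
  have hexpand : ‖w - η • g - u‖ ^ 2 = ‖w - u‖ ^ 2 + 2 * η * ⟪g, u - w⟫_ℝ + η ^ 2 * ‖g‖ ^ 2 := by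
    rw [show w - η • g - u = (w - u) - η • g by abel, norm_sub_sq_real, inner_smul_right,
      norm_smul, Real.norm_eq_abs, mul_pow, sq_abs, real_inner_comm, ← neg_sub u w, inner_neg_right]
    ring
  have hproj2 := pow_le_pow_left₀ (norm_nonneg _) hproj 2
  rw [← sub_le_iff_le_add', le_div_iff₀ (by positivity)]
  nlinarith [mul_le_mul_of_nonneg_left hsub hη.le, mul_le_mul_of_nonneg_left hgap hη.le]

theorem sq_le_sq_add_two_mul_of_le_add {a b s D : ℝ} (ha : 0 ≤ a) (hb : 0 ≤ b) (hs : 0 ≤ s)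
    (haD : a ≤ D) (hbD : b ≤ D) (hab : a ≤ b + s) : a ^ 2 ≤ b ^ 2 + 2 * D * s := by
  nlinarith

section VaryingStepTelescoping

variable {a b s η : ℕ → ℝ} {D lam : ℝ}

-- Keeping `b m ^ 2 / (2 * η m)` on the left lets the induction absorb the change of step size.
theorem sum_sq_sub_sq_div_add_le (hlam : 0 < lam) (hη : ∀ t, lam ≤ η t) (hanti : Antitone η)
    (ha : ∀ t, 0 ≤ a t) (hb : ∀ t, 0 ≤ b t) (hs : ∀ t, 0 ≤ s t)
    (haD : ∀ t, a t ≤ D) (hbD : ∀ t, b t ≤ D) (hab : ∀ t, a (t + 1) ≤ b t + s t) (m : ℕ) :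
    ∑ t ∈ range (m + 1), (a t ^ 2 - b t ^ 2) / (2 * η t) + b m ^ 2 / (2 * η m) ≤
      D ^ 2 / (2 * η m) + D / lam * ∑ t ∈ range m, s t := by
  have hηpos : ∀ t, 0 < η t := fun t => hlam.trans_le (hη t)
  induction m with
  | zero =>
    rw [sum_range_one, range_zero, sum_empty, mul_zero, add_zero, sub_div, sub_add_cancel]
    have := hηpos 0
    gcongr
    exacts [ha 0, haD 0]
  | succ m ih =>
    rw [sum_range_succ, sum_range_succ s, add_assoc, ← add_div, sub_add_cancel]
    have hsq := sq_le_sq_add_two_mul_of_le_add (ha (m + 1)) (hb m) (hs m) (haD (m + 1)) (hbD m)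
      (hab m)
    have hinv : (η m)⁻¹ ≤ (η (m + 1))⁻¹ := inv_anti₀ (hηpos _) (hanti m.le_succ)
    have hinv' : (η (m + 1))⁻¹ ≤ lam⁻¹ := inv_anti₀ hlam (hη _)
    have hbm : b m ^ 2 ≤ D ^ 2 := pow_le_pow_left₀ (hb m) (hbD m) 2
    have hDs : 0 ≤ D * s m := mul_nonneg ((ha 0).trans (haD 0)) (hs m)
    simp only [div_eq_mul_inv, mul_inv] at ih ⊢
    nlinarith [mul_le_mul_of_nonneg_right hsq (inv_nonneg.2 (hηpos (m + 1)).le),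
      mul_le_mul_of_nonneg_left hinv (sub_nonneg.2 hbm), mul_le_mul_of_nonneg_left hinv' hDs]

theorem sum_sq_sub_sq_div_le (hlam : 0 < lam) (hη : ∀ t, lam ≤ η t) (hanti : Antitone η)
    (ha : ∀ t, 0 ≤ a t) (hb : ∀ t, 0 ≤ b t) (hs : ∀ t, 0 ≤ s t)
    (haD : ∀ t, a t ≤ D) (hbD : ∀ t, b t ≤ D) (hab : ∀ t, a (t + 1) ≤ b t + s t) (T : ℕ) :
    ∑ t ∈ range T, (a t ^ 2 - b t ^ 2) / (2 * η t) ≤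
      D / lam * (D / 2 + ∑ t ∈ range (T - 1), s t) := by
  have hD : 0 ≤ D := (ha 0).trans (haD 0)
  cases T with
  | zero => simp only [sum_range_zero, zero_tsub, add_zero]; positivity
  | succ m =>
    have hinv := sum_sq_sub_sq_div_add_le hlam hη hanti ha hb hs haD hbD hab m
    have hηm := hlam.trans_le (hη m)
    have hbm : 0 ≤ b m ^ 2 / (2 * η m) := by positivity
    have hDm : D ^ 2 / (2 * η m) ≤ D ^ 2 / (2 * lam) := by gcongr; exact hη m
    rw [Nat.add_sub_cancel, mul_add, show D / lam * (D / 2) = D ^ 2 / (2 * lam) by ring]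
    linarith

end VaryingStepTelescoping

theorem conv_fenchel_young_main_general {d n T : ℕ}
    (Wset : Set (EuclideanSpace ℝ (Fin d × Fin n))) (D : ℝ)
    (hconv : Convex ℝ Wset)
    (hdiam : ∀ w ∈ Wset, ∀ w' ∈ Wset, ‖w - w'‖ ≤ D)
    (lam : ℝ) (hlam : 0 < lam)
    (L : ℕ → EuclideanSpace ℝ (Fin d × Fin n) → ℝ)
    (η : ℕ → ℝ) (hηmono : ∀ s t, s ≤ t → η t ≤ η s)
    (W G : ℕ → EuclideanSpace ℝ (Fin d × Fin n))
    (hWmem : ∀ t, W t ∈ Wset)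
    -- G t = ∇L_{Ω_τ}(θ_t, y_t) x_tᵀ is a (sub)gradient of L t at W t
    (hsub : ∀ t, ∀ u ∈ Wset, L t (W t) + (inner ℝ (G t) (u - W t) : ℝ) ≤ L t u)
    -- OGD projection step
    (hproj : ∀ t, ∀ u ∈ Wset,
      ‖W (t + 1) - (W t - η t • G t)‖ ≤ ‖u - (W t - η t • G t)‖)
    -- e t : expected target loss of decoding; S t : L_Ω(θ_t + L^ρ π(θ_t), y_t);
    -- gnorm t : ‖∇L_{Ω_τ}(θ_t, y_t)‖₂
    (e S gnorm : ℕ → ℝ)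
    -- target–surrogate relation
    (hrel : ∀ t, e t = L t (W t) - S t)
    -- quadratic lower bound on the surrogate gap
    (hlow : ∀ t, lam / 2 * gnorm t ^ 2 ≤ S t)
    -- ‖G_t‖_F ≤ ‖∇L_{Ω_τ}(θ_t, y_t)‖₂ since ‖x_t‖₂ ≤ 1
    (hGle : ∀ t, ‖G t‖ ≤ gnorm t)
    -- learning-rate range
    (hηlow : ∀ t, lam ≤ η t)
    (hηhigh : ∀ t, η t * ‖G t‖ ^ 2 ≤ 2 * (L t (W t) - e t))
    (U : ℕ → EuclideanSpace ℝ (Fin d × Fin n)) (hU : ∀ t, U t ∈ Wset) :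
    (∀ t, lam / 2 * ‖G t‖ ^ 2 ≤ L t (W t) - e t) ∧
    ∑ t ∈ Finset.range T, e t ≤
      ∑ t ∈ Finset.range T, L t (U t)
        + D / lam * (D / 2 + ∑ t ∈ Finset.range (T - 1), ‖U (t + 1) - U t‖) := by
  refine ⟨fun t => ?_, ?_⟩
  · rw [hrel t, sub_sub_cancel]
    exact (mul_le_mul_of_nonneg_left (pow_le_pow_left₀ (norm_nonneg _) (hGle t) 2)
      (by positivity)).trans (hlow t)
  have hstep (t : ℕ) : e t ≤ L t (U t) +
      (‖W t - U t‖ ^ 2 - ‖W (t + 1) - U t‖ ^ 2) / (2 * η t) :=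
    ogd_step_le (hlam.trans_le (hηlow t)) (hsub t _ (hU t))
      (hconv.norm_sub_le_of_isMinOn_norm_sub (hWmem _) (isMinOn_iff.2 (hproj t)) (hU t))
      (hηhigh t)
  have hdrift (t : ℕ) : ‖W (t + 1) - U (t + 1)‖ ≤ ‖W (t + 1) - U t‖ + ‖U (t + 1) - U t‖ := by
    simpa only [norm_sub_rev (U t)] using norm_sub_le_norm_sub_add_norm_sub _ (U t) _
  calc ∑ t ∈ range T, e t
      ≤ ∑ t ∈ range T, (L t (U t) + (‖W t - U t‖ ^ 2 - ‖W (t + 1) - U t‖ ^ 2) / (2 * η t)) :=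
        sum_le_sum fun t _ => hstep t
    _ ≤ _ := by
      rw [sum_add_distrib]
      gcongr
      exact sum_sq_sub_sq_div_le hlam hηlow hηmono
        (fun _ => norm_nonneg _) (fun _ => norm_nonneg _) (fun _ => norm_nonneg _)
        (fun t => hdiam _ (hWmem t) _ (hU t)) (fun t => hdiam _ (hWmem (t + 1)) _ (hU t))
        hdrift T

/-- Theorem 2 (convolutional Fenchel–Young losses): running OGD with
non-increasing learning rates `λ ≤ η_t ≤ 2(L_t(W_t) − e_t)/‖G_t‖²` on
convolutional Fenchel–Young surrogate losses yields
`Σ e_t ≤ Σ L_t(U_t) + (D/λ)(D/2 + P_T)`; moreover the learning-rate range is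
non-empty since `L_t(W_t) − e_t ≥ (λ/2)‖G_t‖²`. The target–surrogate relation
`e_t = L_t(W_t) − S_t`, the lower bound `S_t ≥ (λ/2)‖∇L_{Ω_τ}(θ_t, y_t)‖₂²`
and `‖G_t‖_F ≤ ‖∇L_{Ω_τ}(θ_t, y_t)‖₂` (from `‖x_t‖₂ ≤ 1`) are given. -/
theorem conv_fenchel_young_main {d n T : ℕ} (hT : 0 < T)
    (Wset : Set (EuclideanSpace ℝ (Fin d × Fin n))) (D : ℝ)
    (hclosed : IsClosed Wset) (hconv : Convex ℝ Wset)
    (hdiam : ∀ w ∈ Wset, ∀ w' ∈ Wset, ‖w - w'‖ ≤ D)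
    (lam : ℝ) (hlam : 0 < lam)
    (L : ℕ → EuclideanSpace ℝ (Fin d × Fin n) → ℝ)
    (hLconv : ∀ t, ConvexOn ℝ Wset (L t))
    (hLnonneg : ∀ t w, 0 ≤ L t w)
    (η : ℕ → ℝ) (hηmono : ∀ s t, s ≤ t → η t ≤ η s)
    (W G : ℕ → EuclideanSpace ℝ (Fin d × Fin n))
    (hWmem : ∀ t, W t ∈ Wset)
    -- G t = ∇L_{Ω_τ}(θ_t, y_t) x_tᵀ is a (sub)gradient of L t at W t
    (hsub : ∀ t, ∀ u ∈ Wset, L t (W t) + (inner ℝ (G t) (u - W t) : ℝ) ≤ L t u)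
    -- OGD projection step
    (hproj : ∀ t, ∀ u ∈ Wset,
      ‖W (t + 1) - (W t - η t • G t)‖ ≤ ‖u - (W t - η t • G t)‖)
    -- e t : expected target loss of decoding; S t : L_Ω(θ_t + L^ρ π(θ_t), y_t);
    -- gnorm t : ‖∇L_{Ω_τ}(θ_t, y_t)‖₂
    (e S gnorm : ℕ → ℝ) (henonneg : ∀ t, 0 ≤ e t)
    -- target–surrogate relation
    (hrel : ∀ t, e t = L t (W t) - S t)
    -- quadratic lower bound on the surrogate gap
    (hlow : ∀ t, lam / 2 * gnorm t ^ 2 ≤ S t)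
    -- ‖G_t‖_F ≤ ‖∇L_{Ω_τ}(θ_t, y_t)‖₂ since ‖x_t‖₂ ≤ 1
    (hGle : ∀ t, ‖G t‖ ≤ gnorm t)
    -- learning-rate range
    (hηlow : ∀ t, lam ≤ η t)
    (hηhigh : ∀ t, η t * ‖G t‖ ^ 2 ≤ 2 * (L t (W t) - e t))
    (U : ℕ → EuclideanSpace ℝ (Fin d × Fin n)) (hU : ∀ t, U t ∈ Wset) :
    (∀ t, lam / 2 * ‖G t‖ ^ 2 ≤ L t (W t) - e t) ∧
    ∑ t ∈ Finset.range T, e t ≤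
      ∑ t ∈ Finset.range T, L t (U t)
        + D / lam * (D / 2 + ∑ t ∈ Finset.range (T - 1), ‖U (t + 1) - U t‖) :=
  conv_fenchel_young_main_general Wset D hconv hdiam lam hlam L η hηmono W G hWmem hsub hproj e S
    gnorm hrel hlow hGle hηlow hηhigh U hU
end
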